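/- Let g, g', h, h' be bounding functions and let (σ,μ) be a pair of strings. Let B and C be sets of pairs of strings, and suppose that B ∪ C is (g+g', h+h')-big above (σ,μ). Then either B is (g,h)-big above (σ,μ) or C is (g',h')-big above (σ,μ). -/

import Mathlib

/-- Strings: finite sequences of natural numbers. -/
abbrev Str := List ℕ

/-- The set of strings extending some element of `A`  (`A^≼`). -/
def above (A : Set Str) : Set Str := {τ | ∃ σ ∈ A, σ <+: τ}

/-- A set of strings is prefix-free if its elements are pairwise incomparable. -/
def PrefixFree (A : Set Str) : Prop := ∀ σ ∈ A, ∀ τ ∈ A, σ <+: τ → σ = τ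

/-- `T` is a tree above `σ`: a nonempty set of extensions of `σ` closed under
initial segments extending `σ`. -/
def IsTreeAbove (σ : Str) (T : Set Str) : Prop :=
  T.Nonempty ∧ (∀ τ ∈ T, σ <+: τ) ∧ ∀ τ ∈ T, ∀ ρ : Str, σ <+: ρ → ρ <+: τ → ρ ∈ T

/-- `T` is a forest above the prefix-free set `A`: `T ⊆ A^≼` contains `A`, and
for each `σ ∈ A`, `T ∩ σ^≼` is a tree above `σ`. -/
def IsForestAbove (A T : Set Str) : Prop :=
  A ⊆ T ∧ T ⊆ above A ∧ ∀ σ ∈ A, IsTreeAbove σ (T ∩ {τ | σ <+: τ})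

/-- `τ` is a leaf (a maximal element) of `T`. -/
def IsLeaf (T : Set Str) (τ : Str) : Prop := τ ∈ T ∧ ∀ ρ ∈ T, τ <+: ρ → ρ = τ

/-- `T` is `h`-bushy: every non-leaf `τ ∈ T` has at least `h |τ|` immediate
successors on `T`. -/
def Bushy (h : ℕ → ℕ) (T : Set Str) : Prop :=
  ∀ τ ∈ T, ¬ IsLeaf T τ →
    h τ.length ≤ {ρ ∈ T | τ <+: ρ ∧ ρ.length = τ.length + 1}.ncard

/-- `B` is `h`-big above the finite prefix-free set `A`: some finite `h`-bushy
forest above `A` has all of its leaves in `B`. -/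
def BigAboveF (h : ℕ → ℕ) (A B : Set Str) : Prop :=
  ∃ T : Set Str, T.Finite ∧ IsForestAbove A T ∧ Bushy h T ∧ ∀ τ : Str, IsLeaf T τ → τ ∈ B

/-- `B` is `h`-big above an arbitrary set `A` of strings: `B` is `h`-big above
every finite prefix-free subset of `A`. -/
def BigAbove (h : ℕ → ℕ) (A B : Set Str) : Prop :=
  ∀ A' : Set Str, A' ⊆ A → A'.Finite → PrefixFree A' → BigAboveF h A' B

/-- A bounding function: a computable function into `[2, ∞)`. -/
def Bounding (h : ℕ → ℕ) : Prop := Computable h ∧ ∀ n, 2 ≤ h n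

/-- The forest `R` is an end-extension of the forest `S`: every string in
`R ∖ S` extends some leaf of `S`. -/
def EndExt (S R : Set Str) : Prop :=
  S ⊆ R ∧ ∀ τ ∈ R, τ ∉ S → ∃ ρ : Str, IsLeaf S ρ ∧ ρ <+: τ

/-- The section `T(τ) = {ρ : (τ, ρ) ∈ T}` of a set of pairs of strings. -/
def sec (T : Set (Str × Str)) (τ : Str) : Set Str := {ρ | (τ, ρ) ∈ T}

/-- The domain `{τ : T(τ) ≠ ∅}` of a set of pairs of strings. -/
def domP (T : Set (Str × Str)) : Set Str := {τ | ∃ ρ, (τ, ρ) ∈ T}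

/-- A set of pairs of strings is prefix-free if its domain is prefix-free and
each of its sections is prefix-free. -/
def PrefixFree2 (A : Set (Str × Str)) : Prop :=
  PrefixFree (domP A) ∧ ∀ τ ∈ domP A, PrefixFree (sec A τ)

/-- A length-2 forest system above the finite prefix-free set `A` of pairs of
strings: `dom T` is a forest above `dom A`; for every `τ ∈ dom T`, `T(τ)` is a
finite forest above `A(τ⁻)`, where `τ⁻` is the (unique) element of `dom A` that
`τ` extends; and `T(τ')` end-extends `T(τ)` whenever `τ ≼ τ'` in `dom T`. -/
def IsForestSys (A T : Set (Str × Str)) : Prop :=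
  IsForestAbove (domP A) (domP T) ∧
  (∀ τ ∈ domP T, (sec T τ).Finite ∧
    ∀ σ ∈ domP A, σ <+: τ → IsForestAbove (sec A σ) (sec T τ)) ∧
  ∀ τ ∈ domP T, ∀ τ' ∈ domP T, τ <+: τ' → EndExt (sec T τ) (sec T τ')

/-- A forest system is `(g, h)`-bushy if its domain is `g`-bushy and each of its
sections is `h`-bushy. -/
def Bushy2 (g h : ℕ → ℕ) (T : Set (Str × Str)) : Prop :=
  Bushy g (domP T) ∧ ∀ τ ∈ domP T, Bushy h (sec T τ)

/-- A leaf of a forest system: a pair `(τ, ρ)` with `τ` a leaf of `dom T` and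
`ρ` a leaf of `T(τ)`. -/
def IsLeaf2 (T : Set (Str × Str)) (p : Str × Str) : Prop :=
  IsLeaf (domP T) p.1 ∧ IsLeaf (sec T p.1) p.2

/-- `B` is `(g, h)`-big above the finite prefix-free set `A` of pairs of
strings: some finite `(g, h)`-bushy forest system above `A` has all of its
leaves in `B`. -/
def BigAboveF2 (g h : ℕ → ℕ) (A B : Set (Str × Str)) : Prop :=
  ∃ T : Set (Str × Str), T.Finite ∧ IsForestSys A T ∧ Bushy2 g h T ∧
    ∀ p : Str × Str, IsLeaf2 T p → p ∈ B

/-- `B` is `(g, h)`-big above an arbitrary set `A` of pairs of strings: `B` is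
`(g, h)`-big above every finite prefix-free subset of `A`. -/
def BigAbove2 (g h : ℕ → ℕ) (A B : Set (Str × Str)) : Prop :=
  ∀ A' : Set (Str × Str), A' ⊆ A → A'.Finite → PrefixFree2 A' → BigAboveF2 g h A' B

/-- A set of pairs of strings is open if it is upwards closed under
coordinatewise extension. -/
def Open2 (C : Set (Str × Str)) : Prop :=
  ∀ p ∈ C, ∀ q : Str × Str, p.1 <+: q.1 → p.2 <+: q.2 → q ∈ C

/-!
A forest system above `(σ, μ)` is a tree above `σ` whose leaves `τ` carry trees above `μ`, so
`B` is `(g, h)`-big above `(σ, μ)` exactly when the set of `τ` such that `B(τ)` is `h`-big above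
`μ` is `g`-big above `σ`. This reduces the statement to its one-dimensional version, applied
once to each section and once to the domain. In one dimension one argues bottom-up on a
`(g + g')`-bushy tree: if each child of a node is witnessed for `B` or for `C`, then by
pigeonhole either `g` children are witnessed for `B` or `g'` are witnessed for `C`, and these
witnesses glue to one at the node.
-/

def children (T : Set Str) (τ : Str) : Set Str :=
  {ρ ∈ T | τ <+: ρ ∧ ρ.length = τ.length + 1}

lemma isForestAbove_singleton_iff {σ : Str} {T : Set Str} :
    IsForestAbove {σ} T ↔
      σ ∈ T ∧ (∀ τ ∈ T, σ <+: τ) ∧ ∀ τ ∈ T, ∀ ρ, σ <+: ρ → ρ <+: τ → ρ ∈ T := by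
  simp only [IsForestAbove, IsTreeAbove, above, Set.singleton_subset_iff, Set.mem_singleton_iff,
    forall_eq, exists_eq_left, Set.mem_inter_iff]
  constructor
  · rintro ⟨hσ, hext, -, -, hclosed⟩
    exact ⟨hσ, fun τ hτ => hext hτ, fun τ hτ ρ hσρ hρτ => (hclosed τ ⟨hτ, hext hτ⟩ ρ hσρ hρτ).1⟩
  · rintro ⟨hσ, hext, hclosed⟩
    exact ⟨hσ, hext, ⟨σ, hσ, List.prefix_rfl⟩, fun τ hτ => hτ.2,
      fun τ hτ ρ hσρ hρτ => ⟨hclosed τ hτ.1 ρ hσρ hρτ, hσρ⟩⟩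

lemma isLeaf_singleton (σ : Str) : IsLeaf {σ} σ :=
  ⟨rfl, fun _ hρ _ => hρ⟩

lemma isForestAbove_singleton_self (σ : Str) : IsForestAbove {σ} {σ} :=
  isForestAbove_singleton_iff.2 ⟨rfl, fun _ hτ => hτ ▸ List.prefix_rfl,
    fun _ hτ _ hσρ hρτ => hσρ.eq_of_length (le_antisymm hσρ.length_le (hτ ▸ hρτ).length_le) ▸ rfl⟩

lemma bushy_singleton (h : ℕ → ℕ) (σ : Str) : Bushy h {σ} :=
  fun _ hτ hnl => (hnl (hτ ▸ isLeaf_singleton σ)).elim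

lemma bigAboveF_singleton_of_mem {h : ℕ → ℕ} {σ : Str} {B : Set Str} (hσ : σ ∈ B) :
    BigAboveF h {σ} B :=
  ⟨{σ}, Set.finite_singleton σ, isForestAbove_singleton_self σ,
    bushy_singleton h σ, fun _ hτ => hτ.1 ▸ hσ⟩

lemma BigAboveF.mono {h : ℕ → ℕ} {A B B' : Set Str} (hB : BigAboveF h A B) (hBB' : B ⊆ B') :
    BigAboveF h A B' :=
  let ⟨T, hfin, hforest, hbushy, hleaf⟩ := hB
  ⟨T, hfin, hforest, hbushy, fun τ hτ => hBB' (hleaf τ hτ)⟩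

lemma Set.Finite.forall_mem_of_extensions {T : Set Str} (hT : T.Finite) {P : Str → Prop}
    (step : ∀ τ ∈ T, (∀ ρ ∈ T, τ <+: ρ → τ.length < ρ.length → P ρ) → P τ) :
    ∀ τ ∈ T, P τ := by
  obtain ⟨N, hN⟩ := (hT.image List.length).bddAbove
  intro τ hτ
  induction hk : N - τ.length using Nat.strong_induction_on generalizing τ with
  | _ k ih =>
    refine step τ hτ fun ρ hρ _ hlt => ih _ ?_ ρ hρ rfl
    have := hN ⟨ρ, hρ, rfl⟩
    omega

lemma children_nonempty_of_not_isLeaf {σ τ : Str} {T : Set Str} (hT : IsForestAbove {σ} T)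
    (hτ : τ ∈ T) (hnl : ¬IsLeaf T τ) : (children T τ).Nonempty := by
  obtain ⟨-, hext, hclosed⟩ := isForestAbove_singleton_iff.1 hT
  obtain ⟨ρ, hρ, hτρ, hne⟩ : ∃ ρ ∈ T, τ <+: ρ ∧ ρ ≠ τ := by
    simpa [IsLeaf, hτ] using hnl
  have hlt : τ.length < ρ.length :=
    lt_of_le_of_ne hτρ.length_le fun hlen => hne (hτρ.eq_of_length hlen).symm
  have hτπ : τ <+: ρ.take (τ.length + 1) := List.prefix_take_iff.2 ⟨hτρ, by omega⟩
  refine ⟨ρ.take (τ.length + 1),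
    hclosed ρ hρ _ ((hext τ hτ).trans hτπ) (List.take_prefix _ _), hτπ, ?_⟩
  simp only [List.length_take]
  omega

lemma children_inter_prefix {T : Set Str} {ρ τ : Str} (hρτ : ρ <+: τ) :
    children (T ∩ {x | ρ <+: x}) τ = children T τ :=
  Set.ext fun _ => ⟨fun ⟨hx, hsucc⟩ => ⟨hx.1, hsucc⟩,
    fun ⟨hx, hτx, hlen⟩ => ⟨⟨hx, hρτ.trans hτx⟩, hτx, hlen⟩⟩

lemma isLeaf_inter_prefix_iff {T : Set Str} {ρ τ : Str} (hρτ : ρ <+: τ) :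
    IsLeaf (T ∩ {x | ρ <+: x}) τ ↔ IsLeaf T τ :=
  ⟨fun ⟨hτ, hmax⟩ => ⟨hτ.1, fun x hx hτx => hmax x ⟨hx, hρτ.trans hτx⟩ hτx⟩,
    fun ⟨hτ, hmax⟩ => ⟨⟨hτ, hρτ⟩, fun x hx => hmax x hx.1⟩⟩

lemma insert_biUnion_inter_prefix {σ ρ : Str} {F : Set Str} {S : Str → Set Str}
    (hF : ∀ ρ ∈ F, ρ.length = σ.length + 1) (hS : ∀ ρ ∈ F, ∀ τ ∈ S ρ, ρ <+: τ) (hρ : ρ ∈ F) :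
    insert σ (⋃ ρ' ∈ F, S ρ') ∩ {τ | ρ <+: τ} = S ρ := by
  ext τ
  simp only [Set.mem_inter_iff, Set.mem_insert_iff, Set.mem_iUnion, exists_prop]
  refine ⟨?_, fun hτ => ⟨Or.inr ⟨ρ, hρ, hτ⟩, hS ρ hρ τ hτ⟩⟩
  rintro ⟨rfl | ⟨ρ', hρ', hτ⟩, hρτ⟩
  · have := hρτ.length_le
    have := hF ρ hρ
    omega
  · have hlen : ρ.length = ρ'.length := by rw [hF ρ hρ, hF ρ' hρ']
    obtain rfl : ρ = ρ' :=
      (List.prefix_of_prefix_length_le hρτ (hS ρ' hρ' τ hτ) hlen.le).eq_of_length hlen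
    exact hτ

lemma isForestAbove_insert_biUnion {σ : Str} {F : Set Str} {S : Str → Set Str}
    (hFsucc : ∀ ρ ∈ F, σ <+: ρ ∧ ρ.length = σ.length + 1)
    (hS : ∀ ρ ∈ F, IsForestAbove {ρ} (S ρ)) :
    IsForestAbove {σ} (insert σ (⋃ ρ ∈ F, S ρ)) := by
  simp only [isForestAbove_singleton_iff] at hS ⊢
  refine ⟨.inl rfl, ?_, ?_⟩
  · rintro τ (rfl | hτ)
    · exact List.prefix_rfl
    obtain ⟨ρ, hρ, hτ⟩ := Set.mem_iUnion₂.1 hτ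
    exact (hFsucc ρ hρ).1.trans ((hS ρ hρ).2.1 τ hτ)
  · rintro τ (rfl | hτ) π hσπ hπτ
    · exact hσπ.eq_of_length (le_antisymm hσπ.length_le hπτ.length_le) ▸ .inl rfl
    by_cases hlen : π.length ≤ σ.length
    · exact hσπ.eq_of_length (le_antisymm hσπ.length_le hlen) ▸ .inl rfl
    obtain ⟨ρ, hρ, hτ⟩ := Set.mem_iUnion₂.1 hτ
    have hρπ : ρ <+: π := List.prefix_of_prefix_length_le ((hS ρ hρ).2.1 τ hτ) hπτ
      (by rw [(hFsucc ρ hρ).2]; omega)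
    exact .inr (Set.mem_biUnion hρ ((hS ρ hρ).2.2 τ hτ π hρπ hπτ))

lemma bigAboveF_singleton_of_successors {g : ℕ → ℕ} {B F : Set Str} {σ : Str}
    (hF : F.Finite) (hFne : F.Nonempty) (hFsucc : ∀ ρ ∈ F, σ <+: ρ ∧ ρ.length = σ.length + 1)
    (hcard : g σ.length ≤ F.ncard) (hbig : ∀ ρ ∈ F, BigAboveF g {ρ} B) :
    BigAboveF g {σ} B := by
  choose! S hSfin hSforest hSbushy hSleaf using hbig
  have hSext : ∀ ρ ∈ F, ∀ τ ∈ S ρ, ρ <+: τ :=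
    fun ρ hρ => (isForestAbove_singleton_iff.1 (hSforest ρ hρ)).2.1
  set T := insert σ (⋃ ρ ∈ F, S ρ)
  have hcone : ∀ ρ ∈ F, T ∩ {τ | ρ <+: τ} = S ρ :=
    fun ρ => insert_biUnion_inter_prefix (fun ρ hρ => (hFsucc ρ hρ).2) hSext
  have hFT : F ⊆ T := fun ρ hρ =>
    .inr (Set.mem_biUnion hρ (isForestAbove_singleton_iff.1 (hSforest ρ hρ)).1)
  have hcases : ∀ τ ∈ T, τ = σ ∨ ∃ ρ ∈ F, τ ∈ S ρ ∧ ρ <+: τ := by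
    rintro τ (rfl | hτ)
    · exact .inl rfl
    obtain ⟨ρ, hρ, hτ⟩ := Set.mem_iUnion₂.1 hτ
    exact .inr ⟨ρ, hρ, hτ, hSext ρ hρ τ hτ⟩
  refine ⟨T, (hF.biUnion hSfin).insert σ, isForestAbove_insert_biUnion hFsucc hSforest,
    fun τ hτ hnl => ?_, fun τ hτ => ?_⟩
  · rcases hcases τ hτ with rfl | ⟨ρ, hρ, hτ, hρτ⟩
    · exact hcard.trans (Set.ncard_le_ncard (fun ρ hρ => ⟨hFT hρ, hFsucc ρ hρ⟩)
        (((hF.biUnion hSfin).insert τ).subset (Set.sep_subset _ _)))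
    have hbushy : g τ.length ≤ (children (T ∩ {x | ρ <+: x}) τ).ncard := by
      rw [hcone ρ hρ]
      exact hSbushy ρ hρ τ hτ (by rwa [← hcone ρ hρ, isLeaf_inter_prefix_iff hρτ])
    rwa [children_inter_prefix hρτ] at hbushy
  · rcases hcases τ hτ.1 with rfl | ⟨ρ, hρ, -, hρτ⟩
    · obtain ⟨ρ, hρ⟩ := hFne
      have hlen := congrArg List.length (hτ.2 ρ (hFT hρ) (hFsucc ρ hρ).1)
      have := (hFsucc ρ hρ).2
      omega
    · exact hSleaf ρ hρ τ (by rwa [← hcone ρ hρ, isLeaf_inter_prefix_iff hρτ])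

lemma bigAboveF_or_of_successors {g g' : ℕ → ℕ} {B C F : Set Str} {σ : Str}
    (hF : F.Finite) (hFne : F.Nonempty) (hFsucc : ∀ ρ ∈ F, σ <+: ρ ∧ ρ.length = σ.length + 1)
    (hcard : g σ.length + g' σ.length ≤ F.ncard)
    (hbig : ∀ ρ ∈ F, BigAboveF g {ρ} B ∨ BigAboveF g' {ρ} C) :
    BigAboveF g {σ} B ∨ BigAboveF g' {σ} C := by
  set FB := {ρ ∈ F | BigAboveF g {ρ} B}
  set FC := {ρ ∈ F | BigAboveF g' {ρ} C}
  have hFB : FB.Finite := hF.subset (Set.sep_subset _ _)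
  have hFC : FC.Finite := hF.subset (Set.sep_subset _ _)
  have hcover : F.ncard ≤ FB.ncard + FC.ncard :=
    (Set.ncard_le_ncard (fun ρ hρ => (hbig ρ hρ).imp (⟨hρ, ·⟩) (⟨hρ, ·⟩)) (hFB.union hFC)).trans
      (Set.ncard_union_le _ _)
  have hpos : 0 < F.ncard := (Set.ncard_pos hF).2 hFne
  have hpigeon :
      (0 < FB.ncard ∧ g σ.length ≤ FB.ncard) ∨ (0 < FC.ncard ∧ g' σ.length ≤ FC.ncard) := by
    omega
  rcases hpigeon with ⟨hpos, hcard⟩ | ⟨hpos, hcard⟩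
  · exact .inl <| bigAboveF_singleton_of_successors hFB ((Set.ncard_pos hFB).1 hpos)
      (fun ρ hρ => hFsucc ρ hρ.1) hcard fun ρ hρ => hρ.2
  · exact .inr <| bigAboveF_singleton_of_successors hFC ((Set.ncard_pos hFC).1 hpos)
      (fun ρ hρ => hFsucc ρ hρ.1) hcard fun ρ hρ => hρ.2

theorem bigAboveF_union {g g' : ℕ → ℕ} {σ : Str} {B C : Set Str}
    (hbig : BigAboveF (g + g') {σ} (B ∪ C)) : BigAboveF g {σ} B ∨ BigAboveF g' {σ} C := by
  obtain ⟨T, hfin, hforest, hbushy, hleaf⟩ := hbig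
  suffices ∀ τ ∈ T, BigAboveF g {τ} B ∨ BigAboveF g' {τ} C from
    this σ (isForestAbove_singleton_iff.1 hforest).1
  refine hfin.forall_mem_of_extensions fun τ hτ ih => ?_
  by_cases hlf : IsLeaf T τ
  · exact (hleaf τ hlf).imp bigAboveF_singleton_of_mem bigAboveF_singleton_of_mem
  refine bigAboveF_or_of_successors (hfin.subset (Set.sep_subset _ _))
    (children_nonempty_of_not_isLeaf hforest hτ hlf) (fun ρ hρ => hρ.2) (hbushy τ hτ hlf)
    fun ρ hρ => ih ρ hρ.1 hρ.2.1 ?_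
  rw [hρ.2.2]
  exact τ.length.lt_succ_self

lemma domP_eq_image_fst (T : Set (Str × Str)) : domP T = Prod.fst '' T :=
  Set.ext fun τ => ⟨fun ⟨ρ, hρ⟩ => ⟨(τ, ρ), hρ, rfl⟩, fun ⟨p, hp, hpτ⟩ => ⟨p.2, hpτ ▸ hp⟩⟩

lemma domP_singleton (σ μ : Str) : domP {(σ, μ)} = {σ} := by
  simp [domP_eq_image_fst]

lemma sec_singleton_self (σ μ : Str) : sec {(σ, μ)} σ = {μ} := by
  ext ρ
  simp [sec, eq_comm]

lemma endExt_singleton {μ : Str} {W : Set Str} (hW : IsForestAbove {μ} W) : EndExt {μ} W :=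
  let ⟨hμ, hext, _⟩ := isForestAbove_singleton_iff.1 hW
  ⟨Set.singleton_subset_iff.2 hμ, fun τ hτ _ => ⟨μ, isLeaf_singleton μ, hext τ hτ⟩⟩

lemma BigAboveF2.bigAboveF_sec {g h : ℕ → ℕ} {σ μ : Str} {B : Set (Str × Str)}
    (hB : BigAboveF2 g h {(σ, μ)} B) : BigAboveF g {σ} {τ | BigAboveF h {μ} (sec B τ)} := by
  obtain ⟨T, hTfin, ⟨hdom, hsec, -⟩, ⟨hdomBushy, hsecBushy⟩, hleaf⟩ := hB
  rw [domP_singleton] at hdom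
  refine ⟨domP T, domP_eq_image_fst T ▸ hTfin.image _, hdom, hdomBushy, fun τ hτ => ?_⟩
  have hforest := (hsec τ hτ.1).2 σ (by rw [domP_singleton]; rfl)
    ((isForestAbove_singleton_iff.1 hdom).2.1 τ hτ.1)
  rw [sec_singleton_self] at hforest
  exact ⟨sec T τ, (hsec τ hτ.1).1, hforest, hsecBushy τ hτ.1, fun ρ hρ => hleaf (τ, ρ) ⟨hτ, hρ⟩⟩

lemma bigAboveF2_of_leafwise {g h : ℕ → ℕ} {σ μ : Str} {B : Set (Str × Str)} {S : Set Str}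
    {V : Str → Set Str} (hSfin : S.Finite) (hSforest : IsForestAbove {σ} S) (hSbushy : Bushy g S)
    (hV : ∀ τ ∈ S, (V τ).Finite ∧ IsForestAbove {μ} (V τ) ∧ Bushy h (V τ))
    (hVinner : ∀ τ ∈ S, ¬IsLeaf S τ → V τ = {μ})
    (hleaf : ∀ τ, IsLeaf S τ → ∀ ρ, IsLeaf (V τ) ρ → (τ, ρ) ∈ B) :
    BigAboveF2 g h {(σ, μ)} B := by
  set T : Set (Str × Str) := {p | p.1 ∈ S ∧ p.2 ∈ V p.1}
  have hdom : domP T = S := Set.ext fun τ =>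
    ⟨fun ⟨_, hp⟩ => hp.1, fun hτ => ⟨μ, hτ, (isForestAbove_singleton_iff.1 (hV τ hτ).2.1).1⟩⟩
  have hsec : ∀ τ ∈ S, sec T τ = V τ := fun τ hτ => Set.ext fun _ => and_iff_right hτ
  have hTfin : T.Finite := (hSfin.prod (hSfin.biUnion fun τ hτ => (hV τ hτ).1)).subset
    fun p hp => ⟨hp.1, Set.mem_biUnion hp.1 hp.2⟩
  refine ⟨T, hTfin, ⟨?_, fun τ hτ => ?_, fun τ hτ τ' hτ' hττ' => ?_⟩,
    ⟨hdom ▸ hSbushy, fun τ hτ => ?_⟩, fun p hp => ?_⟩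
  · rwa [domP_singleton, hdom]
  · rw [hdom] at hτ
    rw [hsec τ hτ, domP_singleton]
    refine ⟨(hV τ hτ).1, fun σ' hσ' _ => ?_⟩
    rw [Set.mem_singleton_iff.1 hσ', sec_singleton_self]
    exact (hV τ hτ).2.1
  · rw [hdom] at hτ hτ'
    rw [hsec τ hτ, hsec τ' hτ']
    by_cases hτleaf : IsLeaf S τ
    · rw [hτleaf.2 τ' hτ' hττ']
      exact ⟨subset_rfl, fun _ hρ hρ' => (hρ' hρ).elim⟩
    · rw [hVinner τ hτ hτleaf]
      exact endExt_singleton (hV τ' hτ').2.1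
  · rw [hdom] at hτ
    rw [hsec τ hτ]
    exact (hV τ hτ).2.2
  · obtain ⟨hτ, hρ⟩ := hp
    rw [hdom] at hτ
    rw [hsec _ hτ.1] at hρ
    exact hleaf p.1 hτ p.2 hρ

lemma bigAboveF2_of_bigAboveF_sec {g h : ℕ → ℕ} {σ μ : Str} {B : Set (Str × Str)}
    (hB : BigAboveF g {σ} {τ | BigAboveF h {μ} (sec B τ)}) : BigAboveF2 g h {(σ, μ)} B := by
  classical
  obtain ⟨S, hSfin, hSforest, hSbushy, hSleaf⟩ := hB
  choose! W hWfin hWforest hWbushy hWleaf using hSleaf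
  refine bigAboveF2_of_leafwise (V := fun τ => if IsLeaf S τ then W τ else {μ})
    hSfin hSforest hSbushy (fun τ _ => ?_) (fun τ _ hτ => if_neg hτ) fun τ hτ => ?_
  · by_cases hτ : IsLeaf S τ
    · simp only [if_pos hτ]
      exact ⟨hWfin τ hτ, hWforest τ hτ, hWbushy τ hτ⟩
    · simp only [if_neg hτ]
      exact ⟨Set.finite_singleton μ, isForestAbove_singleton_self μ, bushy_singleton h μ⟩
  · simp only [if_pos hτ]
    exact hWleaf τ hτ

lemma bigAboveF2_singleton_iff {g h : ℕ → ℕ} {σ μ : Str} {B : Set (Str × Str)} :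
    BigAboveF2 g h {(σ, μ)} B ↔ BigAboveF g {σ} {τ | BigAboveF h {μ} (sec B τ)} :=
  ⟨BigAboveF2.bigAboveF_sec, bigAboveF2_of_bigAboveF_sec⟩

theorem big_subset_property_pairs_general (g g' h h' : ℕ → ℕ)
    (σ μ : Str) (B C : Set (Str × Str))
    (hbig : BigAboveF2 (fun n => g n + g' n) (fun n => h n + h' n) {(σ, μ)} (B ∪ C)) :
    BigAboveF2 g h {(σ, μ)} B ∨ BigAboveF2 g' h' {(σ, μ)} C := by
  rw [bigAboveF2_singleton_iff] at hbig
  rw [bigAboveF2_singleton_iff, bigAboveF2_singleton_iff]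
  exact bigAboveF_union (hbig.mono fun τ hτ => bigAboveF_union hτ)

/-- Big subset property for pairs: if `B ∪ C` is `(g+g', h+h')`-big above the
pair `(σ, μ)`, then `B` is `(g, h)`-big above `(σ, μ)` or `C` is `(g', h')`-big
above `(σ, μ)`. -/
theorem big_subset_property_pairs (g g' h h' : ℕ → ℕ)
    (hg : Bounding g) (hg' : Bounding g') (hh : Bounding h) (hh' : Bounding h')
    (σ μ : Str) (B C : Set (Str × Str))
    (hbig : BigAboveF2 (fun n => g n + g' n) (fun n => h n + h' n) {(σ, μ)} (B ∪ C)) :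
    BigAboveF2 g h {(σ, μ)} B ∨ BigAboveF2 g' h' {(σ, μ)} C :=
  big_subset_property_pairs_general g g' h h' σ μ B C hbig
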